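/- arXiv:2111.02103 — 2 statements merged into one kernel-verified Lean document; each statement's English description precedes it below -/
import Mathlib

section
/- Let p ≥ 5 be a prime. Then Σ_{m odd, 1 ≤ m ≤ p−2} H_m ≡ (H'_{p−1} + 1)/2 (mod p), where H'_{p−1} = 1 + 1/3 + 1/5 + ⋯ + 1/(p−2). -/
/-!
For odd `n`, counting how often each `1/i` occurs gives
`2 ∑_{m ≤ n odd} H_m = (n + 1) H_n - n + H'_n`. For `n = p - 2` this reduces the claim to
`(p - 1) H_{p-1} ≡ p ≡ 0 (mod p)`, i.e. to `p ∣ H_{p-1}`, which follows by pairing `i` with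
`p - i`: `1/i + 1/(p - i) = p/(i (p - i))`.
-/

/-- Harmonic number `H_n = ∑_{i=1}^n 1/i` (with `H_0 = 0`). -/
def H (n : ℕ) : ℚ := ∑ i ∈ Finset.range n, 1 / ((i : ℚ) + 1)
/-- Congruence of `p`-integral rationals modulo `p^k`: the `p`-adic valuation of
`x - y` is at least `k`, expressed via the `p`-adic norm. -/
def ratCongr (p k : ℕ) (x y : ℚ) : Prop :=
  padicNorm p (x - y) ≤ (p : ℚ) ^ (-(k : ℤ))

lemma H_succ (n : ℕ) : H (n + 1) = H n + 1 / ((n : ℚ) + 1) :=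
  Finset.sum_range_succ _ _

lemma sum_Icc_filter_odd_eq_sum_range {M : Type*} [AddCommMonoid M] (f : ℕ → M) (k : ℕ) :
    ∑ m ∈ (Finset.Icc 1 (2 * k + 1)).filter Odd, f m =
      ∑ j ∈ Finset.range (k + 1), f (2 * j + 1) := by
  symm
  refine Finset.sum_nbij' (fun j => 2 * j + 1) (fun m => m / 2) ?_ ?_ ?_ ?_ fun _ _ => rfl <;>
    intro a ha <;>
    simp only [Finset.mem_filter, Finset.mem_Icc, Finset.mem_range, Nat.odd_iff] at ha ⊢ <;>
    omega

lemma two_mul_sum_H_odd (k : ℕ) :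
    2 * ∑ j ∈ Finset.range (k + 1), H (2 * j + 1) =
      (2 * k + 2) * H (2 * k + 1) - (2 * k + 1) +
        ∑ j ∈ Finset.range (k + 1), 1 / (2 * (j : ℚ) + 1) := by
  induction k with
  | zero => simp
  | succ k ih =>
    have hH : H (2 * (k + 1) + 1) = H (2 * k + 1) + 1 / (2 * k + 2) + 1 / (2 * k + 3) := by
      rw [show 2 * (k + 1) + 1 = 2 * k + 1 + 1 + 1 by ring, H_succ, H_succ]
      push_cast
      ring
    rw [Finset.sum_range_succ, Finset.sum_range_succ _ (k + 1), mul_add, ih, hH]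
    push_cast
    field_simp
    ring

lemma two_mul_H_eq_succ_mul_sum (n : ℕ) :
    2 * H n = (n + 1) * ∑ i ∈ Finset.range n, (((i + 1) * (n - i) : ℕ) : ℚ)⁻¹ := by
  rw [two_mul]
  nth_rw 2 [H]
  rw [← Finset.sum_range_reflect, H, ← Finset.sum_add_distrib, Finset.mul_sum]
  refine Finset.sum_congr rfl fun i hi => ?_
  obtain ⟨j, rfl⟩ : ∃ j, n = i + 1 + j := ⟨n - i - 1, by have := Finset.mem_range.mp hi; omega⟩
  rw [show i + 1 + j - 1 - i = j by omega, show i + 1 + j - i = j + 1 by omega]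
  push_cast
  field_simp
  ring

lemma padicNorm_inv_natCast_of_not_dvd {p : ℕ} [Fact p.Prime] {m : ℕ} (h : ¬p ∣ m) :
    padicNorm p (m : ℚ)⁻¹ = 1 := by
  rw [← one_div, padicNorm.div, padicNorm.one, (padicNorm.nat_eq_one_iff m).2 h, div_one]

lemma padicNorm_two {p : ℕ} [Fact p.Prime] (hp2 : p ≠ 2) : padicNorm p 2 = 1 := by
  exact_mod_cast padicNorm.padicNorm_of_prime_of_ne (q := 2) hp2

lemma padicNorm_H_prime_pred_le {p : ℕ} [hp : Fact p.Prime] (hp2 : p ≠ 2) :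
    padicNorm p (H (p - 1)) ≤ (p : ℚ)⁻¹ := by
  have hsum : padicNorm p
      (∑ i ∈ Finset.range (p - 1), (((i + 1) * (p - 1 - i) : ℕ) : ℚ)⁻¹) ≤ 1 := by
    refine padicNorm.sum_le' (fun i hi => (padicNorm_inv_natCast_of_not_dvd ?_).le) zero_le_one
    have hi : i < p - 1 := Finset.mem_range.mp hi
    rw [hp.out.dvd_mul]
    rintro (h | h) <;> have := Nat.le_of_dvd (by omega) h <;> omega
  have h := congrArg (padicNorm p) (two_mul_H_eq_succ_mul_sum (p - 1))
  rw [Nat.cast_sub hp.out.one_lt.le, Nat.cast_one, sub_add_cancel, padicNorm.mul, padicNorm.mul,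
    padicNorm_two hp2, one_mul, padicNorm.padicNorm_p_of_prime] at h
  rw [h]
  simpa using mul_le_mul_of_nonneg_left hsum (inv_nonneg.2 (Nat.cast_nonneg p))

/-- The sum of harmonic numbers with odd indices is `(H'_{p−1} + 1)/2` mod `p`, where
`H'_{p−1}` is the sum of reciprocals of odd integers from `1` to `p−2`. -/
theorem sum_odd_harmonic_numbers (p : ℕ) (hp : p.Prime) (hp5 : 5 ≤ p) :
    ratCongr p 1
      (∑ m ∈ (Finset.Icc 1 (p - 2)).filter (fun m => Odd m), H m)
      (((∑ i ∈ (Finset.Icc 1 (p - 2)).filter (fun i => Odd i), 1 / (i : ℚ)) + 1) / 2) := by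
  have := Fact.mk hp
  have hp2 : p ≠ 2 := by omega
  obtain ⟨k, hk⟩ : ∃ k, p = 2 * k + 3 :=
    ⟨(p - 3) / 2, by have := Nat.odd_iff.mp (hp.odd_of_ne_two hp2); omega⟩
  have hdiff : (∑ m ∈ (Finset.Icc 1 (p - 2)).filter (fun m => Odd m), H m)
      - ((∑ i ∈ (Finset.Icc 1 (p - 2)).filter (fun i => Odd i), 1 / (i : ℚ)) + 1) / 2
      = (((p - 1 : ℕ) : ℚ) * H (p - 1) - p) / 2 := by
    have hH := H_succ (2 * k + 1)
    have hinv : (2 * k + 2 : ℚ) * (1 / (2 * k + 2)) = 1 := mul_one_div_cancel (by positivity)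
    rw [hk, show 2 * k + 3 - 2 = 2 * k + 1 by omega, show 2 * k + 3 - 1 = 2 * k + 1 + 1 by omega,
      sum_Icc_filter_odd_eq_sum_range, sum_Icc_filter_odd_eq_sum_range (fun i => 1 / (i : ℚ)), hH]
    push_cast at hH ⊢
    linear_combination (1 / 2 : ℚ) * two_mul_sum_H_odd k - (1 / 2 : ℚ) * hinv
  have hmul : padicNorm p (((p - 1 : ℕ) : ℚ) * H (p - 1)) ≤ (p : ℚ)⁻¹ := by
    rw [padicNorm.mul]
    exact (mul_le_of_le_one_left (padicNorm.nonneg _) (padicNorm.of_nat _)).trans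
      (padicNorm_H_prime_pred_le hp2)
  rw [ratCongr, hdiff, padicNorm.div, padicNorm_two hp2, div_one, Nat.cast_one, zpow_neg_one]
  exact padicNorm.sub.trans (max_le hmul padicNorm.padicNorm_p_of_prime.le)
end

section
/- Let p ≥ 5 be a prime. Then Σ_{j=2}^{p−3} B_j·B_{p−1−j} ≡ 1 (mod p), as a congruence of p-integral rational numbers. -/
/-!
Comparing coefficients in `B(x)² = (1 - x) B(x) - x B'(x)`, where `B(x) = x / (eˣ - 1)`, gives
Euler's identity `∑_{j=2}^{n-2} C(n, j) B_j B_{n-j} = -(n + 1) B_n` for even `n ≥ 4`. For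
`n = p - 1` the right side is `-p B_{p-1} ≡ 1 (mod p)` by von Staudt–Clausen. On the left,
`C(p - 1, j) ≡ (-1)^j (mod p)`, the odd-index terms vanish and the remaining Bernoulli numbers
are `p`-integral (von Staudt–Clausen again), so the binomial weights may be dropped mod `p`.
-/

open Finset PowerSeries Nat

namespace ratCongr

variable {p k : ℕ} {x y z : ℚ}

theorem refl (x : ℚ) : ratCongr p k x x := by
  rw [ratCongr, sub_self, padicNorm.zero]
  positivity

theorem neg (h : ratCongr p k x y) : ratCongr p k (-x) (-y) := by
  rwa [ratCongr, neg_sub_neg, ← padicNorm.neg, neg_sub]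

variable [Fact p.Prime]

theorem trans (hxy : ratCongr p k x y) (hyz : ratCongr p k y z) : ratCongr p k x z := by
  rw [ratCongr, ← sub_add_sub_cancel x y z]
  exact padicNorm.nonarchimedean.trans (max_le hxy hyz)

theorem mul_right (h : ratCongr p k x y) {c : ℚ} (hc : padicNorm p c ≤ 1) :
    ratCongr p k (x * c) (y * c) := by
  rw [ratCongr, ← sub_mul, padicNorm.mul]
  exact (mul_le_of_le_one_right (padicNorm.nonneg _) hc).trans h

theorem sum {ι : Type*} {s : Finset ι} {f g : ι → ℚ}
    (h : ∀ i ∈ s, ratCongr p k (f i) (g i)) :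
    ratCongr p k (∑ i ∈ s, f i) (∑ i ∈ s, g i) := by
  rw [ratCongr, ← sum_sub_distrib]
  exact padicNorm.sum_le' h (by positivity)

end ratCongr

theorem ratCongr_intCast_iff {p k : ℕ} [Fact p.Prime] {a b : ℤ} :
    ratCongr p k a b ↔ a ≡ b [ZMOD p ^ k] := by
  rw [ratCongr, ← Int.cast_sub, ← padicNorm.dvd_iff_norm_le, Int.modEq_comm,
    Int.modEq_iff_dvd]
  push_cast
  rfl

theorem Nat.Prime.choose_pred_modEq {p j : ℕ} (hp : p.Prime) (hj : j < p) :
    ((p - 1).choose j : ℤ) ≡ (-1) ^ j [ZMOD p] := by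
  have h := congrArg (Int.cast : ℤ → ZMod p)
    (Int.alternating_sum_range_choose_eq_choose (n := p - 1) (m := j))
  rw [Nat.sub_add_cancel hp.one_le, sum_range_succ'] at h
  have hvanish : ∀ i ∈ range j, ((p.choose (i + 1) : ℤ) : ZMod p) = 0 := fun i hi =>
    (ZMod.intCast_zmod_eq_zero_iff_dvd _ _).2 <| Int.natCast_dvd_natCast.2 <|
      hp.dvd_choose_self i.succ_ne_zero (by simp at hi; omega)
  rw [← ZMod.intCast_eq_intCast_iff]
  push_cast at h hvanish ⊢
  rw [sum_eq_zero fun i hi => by rw [hvanish i hi, mul_zero], Nat.choose_zero_right] at h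
  have hsq : ((-1 : ZMod p) ^ j) ^ 2 = 1 := by rw [← pow_mul, mul_comm, pow_mul]; simp
  linear_combination -(-1) ^ j * h - ((p - 1).choose j : ZMod p) * hsq

theorem PowerSeries.coeff_mul_mk_div_factorial (a b : ℕ → ℚ) (n : ℕ) :
    coeff n (mk (fun k => a k / k !) * mk (fun k => b k / k !))
      = (∑ ij ∈ antidiagonal n, n.choose ij.1 * a ij.1 * b ij.2) / n ! := by
  rw [coeff_mul, sum_div]
  refine sum_congr rfl fun ⟨i, j⟩ hij => ?_
  rw [HasAntidiagonal.mem_antidiagonal] at hij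
  subst hij
  rw [coeff_mk, coeff_mk, Nat.cast_add_choose]
  field_simp

theorem bernoulliPowerSeries_sq :
    bernoulliPowerSeries ℚ ^ 2
      = (1 - X) * bernoulliPowerSeries ℚ - X * d⁄dX ℚ (bernoulliPowerSeries ℚ) := by
  set B := bernoulliPowerSeries ℚ
  have hBE : B * (exp ℚ - 1) = X := bernoulliPowerSeries_mul_exp_sub_one ℚ
  have hE : exp ℚ - 1 ≠ 0 := fun h => by simpa using congrArg (coeff 1) h
  have hderiv : d⁄dX ℚ B * (exp ℚ - 1) + B * exp ℚ = 1 := by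
    simpa [derivative_exp, smul_eq_mul, add_comm, mul_comm] using congrArg (d⁄dX ℚ) hBE
  apply mul_right_cancel₀ hE
  linear_combination (B - 1) * hBE + X * hderiv

theorem sum_range_choose_mul_bernoulli_mul_bernoulli (n : ℕ) :
    ∑ j ∈ range (n + 2), ((n + 1).choose j : ℚ) * bernoulli j * bernoulli (n + 1 - j)
      = -n * bernoulli (n + 1) - (n + 1) * bernoulli n := by
  have h := congrArg (coeff (n + 1)) bernoulliPowerSeries_sq
  simp only [bernoulliPowerSeries, Algebra.algebraMap_self, RingHom.id_apply] at h
  rw [sq, coeff_mul_mk_div_factorial, sum_antidiagonal_eq_sum_range_succ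
    (fun i j => ((n + 1).choose i : ℚ) * bernoulli i * bernoulli j),
    div_eq_iff (by positivity)] at h
  rw [h]
  simp only [sub_mul, one_mul, map_sub, coeff_succ_X_mul, coeff_derivative, coeff_mk]
  push_cast [factorial_succ]
  field_simp
  ring

theorem sum_Icc_choose_mul_bernoulli_mul_bernoulli {n : ℕ} (hn : Even n) (h4 : 4 ≤ n) :
    ∑ j ∈ Icc 2 (n - 2), (n.choose j : ℚ) * bernoulli j * bernoulli (n - j)
      = -(n + 1) * bernoulli n := by
  obtain ⟨m, rfl⟩ := Nat.exists_eq_add_of_le' h4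
  have hodd : bernoulli (m + 3) = 0 :=
    bernoulli_eq_zero_of_odd (by simpa [parity_simps] using hn) (by omega)
  have h := sum_range_choose_mul_bernoulli_mul_bernoulli (m + 3)
  rw [sum_range_succ, sum_range_succ, sum_range_succ', sum_range_succ'] at h
  simp only [add_assoc, Nat.reduceAdd, show m + 4 - 1 = m + 3 by omega, hodd,
    Nat.choose_zero_right, Nat.choose_self, bernoulli_zero, Nat.sub_zero, Nat.sub_self] at h
  rw [← Ico_add_one_right_eq_Icc, sum_Ico_eq_sum_range, show m + 4 - 2 + 1 - 2 = m + 1 by omega]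
  simp only [add_comm 2]
  push_cast at h ⊢
  linear_combination h

theorem padicNorm_bernoulli_add_le_one {p k : ℕ} [Fact p.Prime] (hk : 0 < k) :
    padicNorm p (bernoulli (2 * k) + if p - 1 ∣ 2 * k then (1 : ℚ) / p else 0) ≤ 1 := by
  obtain ⟨z, hz⟩ := Bernoulli.vonStaudt_clausen k
  set S := {q ∈ range (2 * k + 2) | q.Prime ∧ (q - 1) ∣ 2 * k}
  rw [← sum_filter_add_sum_filter_not S (· = p)] at hz
  have hself :
      ∑ q ∈ S with q = p, (1 : ℚ) / q = if p - 1 ∣ 2 * k then (1 : ℚ) / p else 0 := by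
    rw [filter_eq']
    split_ifs with hS hdvd hdvd
    · exact sum_singleton _ _
    · exact absurd (mem_filter.1 hS).2.2 hdvd
    · have hlt : p < 2 * k + 2 := by have := Nat.le_of_dvd (by omega) hdvd; omega
      exact absurd (mem_filter.2 ⟨mem_range.2 hlt, Fact.out, hdvd⟩) hS
    · exact sum_empty
  have hrest : padicNorm p (∑ q ∈ S with ¬q = p, (1 : ℚ) / q) ≤ 1 := by
    refine padicNorm.sum_le' (fun q hq => ?_) zero_le_one
    simp only [S, mem_filter] at hq
    obtain ⟨⟨-, hq, -⟩, hqp⟩ := hq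
    have hpq : ¬p ∣ q := fun h => hqp ((Nat.prime_dvd_prime_iff_eq Fact.out hq).1 h).symm
    rw [padicNorm.div, padicNorm.one, (padicNorm.nat_eq_one_iff q).2 hpq, div_one]
  have hsplit : bernoulli (2 * k) + (if p - 1 ∣ 2 * k then (1 : ℚ) / p else 0)
      = z - ∑ q ∈ S with ¬q = p, (1 : ℚ) / q := by
    rw [hz, hself]; ring
  rw [hsplit]
  exact padicNorm.sub.trans (max_le (padicNorm.of_int z) hrest)

theorem padicNorm_bernoulli_le_one {p n : ℕ} [Fact p.Prime] (hn : Even n) (hnp : n + 2 ≤ p) :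
    padicNorm p (bernoulli n) ≤ 1 := by
  obtain ⟨k, rfl⟩ := hn
  rcases Nat.eq_zero_or_pos k with rfl | hk
  · simp
  have hndvd : ¬p - 1 ∣ 2 * k := fun h => by have := Nat.le_of_dvd (by omega) h; omega
  have h := padicNorm_bernoulli_add_le_one (p := p) hk
  rwa [if_neg hndvd, add_zero, two_mul] at h

theorem ratCongr_mul_bernoulli_sub_one {p : ℕ} [hp : Fact p.Prime] :
    ratCongr p 1 (p * bernoulli (p - 1)) (-1) := by
  rcases hp.out.eq_two_or_odd' with rfl | hodd
  · norm_num [bernoulli_one, ratCongr.refl]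
  obtain ⟨k, hk⟩ : Even (p - 1) := Nat.Odd.sub_odd hodd odd_one
  have h := padicNorm_bernoulli_add_le_one (p := p) (k := k) (by have := hp.out.two_le; omega)
  rw [two_mul, ← hk, if_pos dvd_rfl] at h
  have hp0 : (p : ℚ) ≠ 0 := by exact_mod_cast hp.out.ne_zero
  rw [ratCongr, sub_neg_eq_add, show (p : ℚ) * bernoulli (p - 1) + 1
    = p * (bernoulli (p - 1) + 1 / p) by field_simp, padicNorm.mul,
    padicNorm.padicNorm_p_of_prime, Nat.cast_one, zpow_neg_one]
  exact mul_le_of_le_one_right (by positivity) h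

theorem ratCongr_bernoulli_mul_bernoulli_choose_mul {p j : ℕ} [hp : Fact p.Prime] (hj2 : 2 ≤ j)
    (hjp : j + 3 ≤ p) :
    ratCongr p 1 (bernoulli j * bernoulli (p - 1 - j))
      ((p - 1).choose j * bernoulli j * bernoulli (p - 1 - j)) := by
  rcases Nat.even_or_odd j with hj | hj
  · have hmod : (1 : ℤ) ≡ (p - 1).choose j [ZMOD p ^ 1] := by
      simpa [hj.neg_one_pow] using (hp.out.choose_pred_modEq (j := j) (by omega)).symm
    have hchoose : ratCongr p 1 1 ((p - 1).choose j) := by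
      exact_mod_cast ratCongr_intCast_iff.2 hmod
    have hpred : Even (p - 1) := Nat.Odd.sub_odd (hp.out.odd_of_ne_two (by omega)) odd_one
    have hcompl : Even (p - 1 - j) := (Nat.even_sub (by omega)).2 ⟨fun _ => hj, fun _ => hpred⟩
    have hint : padicNorm p (bernoulli j * bernoulli (p - 1 - j)) ≤ 1 := by
      rw [padicNorm.mul]
      exact mul_le_one₀ (padicNorm_bernoulli_le_one hj (by omega)) (padicNorm.nonneg _)
        (padicNorm_bernoulli_le_one hcompl (by omega))
    simpa [mul_assoc] using hchoose.mul_right hint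
  · simp [bernoulli_eq_zero_of_odd hj (by omega), ratCongr.refl]

/-- `∑_{j=2}^{p−3} B_j B_{p−1−j} ≡ 1 (mod p)`. -/
theorem bernoulli_convolution_order_p_sub_one (p : ℕ) (hp : p.Prime) (hp5 : 5 ≤ p) :
    ratCongr p 1
      (∑ j ∈ Finset.Icc 2 (p - 3), bernoulli j * bernoulli (p - 1 - j))
      1 := by
  have := Fact.mk hp
  have heven : Even (p - 1) := Nat.Odd.sub_odd (hp.odd_of_ne_two (by omega)) odd_one
  have hdrop : ratCongr p 1 (∑ j ∈ Icc 2 (p - 3), bernoulli j * bernoulli (p - 1 - j))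
      (∑ j ∈ Icc 2 (p - 3), ((p - 1).choose j : ℚ) * bernoulli j * bernoulli (p - 1 - j)) :=
    ratCongr.sum fun j hj => by
      rw [mem_Icc] at hj
      exact ratCongr_bernoulli_mul_bernoulli_choose_mul hj.1 (by omega)
  have heuler := sum_Icc_choose_mul_bernoulli_mul_bernoulli heven (by omega)
  rw [show p - 1 - 2 = p - 3 by omega, Nat.cast_sub hp.one_le] at heuler
  rw [heuler] at hdrop
  refine hdrop.trans ?_
  simpa using ratCongr_mul_bernoulli_sub_one.neg
end
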